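/- arXiv:2508.00431 — 2 statements merged into one kernel-verified Lean document; each statement's English description precedes it below -/
import Mathlib

section
/- Let A be an AUF algebra. Then: (a) for any idempotents e, f ∈ A, one has dim_ℂ eAf < ∞; (b) every nonzero idempotent e ∈ A admits a finite orthogonal primitive decomposition, i.e., there exist pairwise orthogonal primitive idempotents ε₁, …, ε_n of A with e = ε₁ + ⋯ + ε_n. -/
/-!
The idempotents `E i` of an AUF algebra act as local units: every element is a finite sum of
elements of corners `E i A E j`, so it is absorbed on both sides by `∑ i ∈ T, E i` for some
finite `T`. Taking `T` large enough for `e` and `f`, the corner `eAf` lies in the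
finite-dimensional space `⨆ i, j ∈ T, E i A E j`. For (b), a non-primitive idempotent `e` splits
as `f + (e - f)` into orthogonal idempotents whose corners are proper subspaces of `eAe`, so
induction on `dim eAe` terminates.
-/

open scoped BigOperators

universe u v

section BasicDefs

variable (R : Type u)

section MulOnly
variable [NonUnitalRing R]

/-- An idempotent element. -/
def IsIdem (e : R) : Prop := e * e = e

/-- Two idempotents are orthogonal. -/
def OrthIdem (e f : R) : Prop := e * f = 0 ∧ f * e = 0

/-- `f ≤ e` for idempotents: `f * e = f` and `e * f = f`. -/
def SubIdem (f e : R) : Prop := f * e = f ∧ e * f = f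

/-- A primitive idempotent. -/
def IsPrimIdem (e : R) : Prop :=
  IsIdem R e ∧ e ≠ 0 ∧ ∀ f : R, IsIdem R f → SubIdem R f e → f = 0 ∨ f = e

/-- Equivalence of idempotents: partial isometries `u ∈ eRf`, `v ∈ fRe` with
`u * v = e`, `v * u = f`. -/
def IdemEquiv (e f : R) : Prop :=
  ∃ u v : R, e * u * f = u ∧ f * v * e = v ∧ u * v = e ∧ v * u = f

/-- A generating idempotent: it has a finite orthogonal primitive decomposition
    such that every primitive idempotent is equivalent to a member of it. -/
def IsGenIdem (e : R) : Prop :=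
  IsIdem R e ∧ ∃ (n : ℕ) (ε : Fin n → R),
    (∀ k, IsPrimIdem R (ε k)) ∧ (∀ k l, k ≠ l → OrthIdem R (ε k) (ε l)) ∧
    e = ∑ k, ε k ∧ ∀ p : R, IsPrimIdem R p → ∃ k, IdemEquiv R p (ε k)

/-- An idempotent of the corner algebra `fRf`. -/
def IsIdemIn (f e : R) : Prop := IsIdem R e ∧ f * e * f = e

/-- A primitive idempotent of the corner algebra `fRf`. -/
def IsPrimIdemIn (f e : R) : Prop :=
  IsIdemIn R f e ∧ e ≠ 0 ∧ ∀ g : R, IsIdemIn R f g → SubIdem R g e → g = 0 ∨ g = e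

/-- Equivalence of idempotents within the corner algebra `fRf`. -/
def IdemEquivIn (f p q : R) : Prop :=
  ∃ u v : R, f * u * f = u ∧ f * v * f = v ∧ p * u * q = u ∧ q * v * p = v ∧
    u * v = p ∧ v * u = q

/-- A generating idempotent of the corner algebra `fRf`. -/
def IsGenIdemIn (f e : R) : Prop :=
  IsIdemIn R f e ∧ ∃ (n : ℕ) (ε : Fin n → R),
    (∀ k, IsPrimIdemIn R f (ε k)) ∧ (∀ k l, k ≠ l → OrthIdem R (ε k) (ε l)) ∧
    e = ∑ k, ε k ∧ ∀ p : R, IsPrimIdemIn R f p → ∃ k, IdemEquivIn R f p (ε k)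

end MulOnly

section Subspaces
variable [NonUnitalRing R] [Module ℂ R] [SMulCommClass ℂ R R] [IsScalarTower ℂ R R]

/-- The subspace `Re = {x | x * e = x}`. -/
def subAe (e : R) : Submodule ℂ R where
  carrier := {x | x * e = x}
  add_mem' := by
    intro a b ha hb
    simp only [Set.mem_setOf_eq] at *
    rw [add_mul, ha, hb]
  zero_mem' := by simp
  smul_mem' := by
    intro c x hx
    simp only [Set.mem_setOf_eq] at *
    rw [smul_mul_assoc, hx]

/-- The corner subspace `eRf = {x | e * x * f = x}`. -/
def subCorner (e f : R) : Submodule ℂ R where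
  carrier := {x | e * x * f = x}
  add_mem' := by
    intro a b ha hb
    simp only [Set.mem_setOf_eq] at *
    rw [mul_add, add_mul, ha, hb]
  zero_mem' := by simp
  smul_mem' := by
    intro c x hx
    simp only [Set.mem_setOf_eq] at *
    rw [mul_smul_comm, smul_mul_assoc, hx]

/-- A symmetric linear functional. -/
def IsSLF (ψ : R →ₗ[ℂ] ℂ) : Prop := ∀ x y : R, ψ (x * y) = ψ (y * x)

/-- Witness data for an AUF algebra: a family of pairwise orthogonal idempotents with
finite-dimensional corners spanning the algebra. -/
def IsAUFWitness {I : Type v} (E : I → R) : Prop :=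
  (∀ i, IsIdem R (E i)) ∧ (∀ i j, i ≠ j → OrthIdem R (E i) (E j)) ∧
  (∀ i j, FiniteDimensional ℂ (subCorner R (E i) (E j))) ∧
  (⨆ i, ⨆ j, subCorner R (E i) (E j)) = ⊤

/-- An almost unital and finite-dimensional (AUF) algebra. -/
def IsAUF : Prop := ∃ (I : Type u) (E : I → R), IsAUFWitness R E

end Subspaces

end BasicDefs

def HasPrimDecomp (R : Type*) [NonUnitalRing R] (e : R) : Prop :=
  ∃ (n : ℕ) (ε : Fin n → R),
    (∀ k, IsPrimIdem R (ε k)) ∧ (∀ k l, k ≠ l → OrthIdem R (ε k) (ε l)) ∧ e = ∑ k, ε k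

section Idempotents

variable {R : Type*} [NonUnitalRing R]

theorem OrthIdem.symm {e f : R} (h : OrthIdem R e f) : OrthIdem R f e := ⟨h.2, h.1⟩

theorem OrthIdem.of_subIdem {e f e' f' : R} (h : OrthIdem R e f) (he : SubIdem R e' e)
    (hf : SubIdem R f' f) : OrthIdem R e' f' := by
  constructor
  · rw [← he.1, ← hf.2, mul_assoc, ← mul_assoc e, h.1, zero_mul, mul_zero]
  · rw [← hf.1, ← he.2, mul_assoc, ← mul_assoc f, h.2, zero_mul, mul_zero]

theorem SubIdem.mul_eq_of_mul_eq_left {p q x : R} (h : SubIdem R p q) (hx : p * x = x) :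
    q * x = x := by
  rw [← hx, ← mul_assoc, h.2]

theorem SubIdem.mul_eq_of_mul_eq_right {p q x : R} (h : SubIdem R p q) (hx : x * p = x) :
    x * q = x := by
  rw [← hx, mul_assoc, h.1]

theorem SubIdem.isIdem_sub {e f : R} (he : IsIdem R e) (hf : IsIdem R f) (hfe : SubIdem R f e) :
    IsIdem R (e - f) := by
  unfold IsIdem at *
  rw [mul_sub, sub_mul, sub_mul, he, hf, hfe.1, hfe.2]
  abel

theorem SubIdem.sub_subIdem {e f : R} (he : IsIdem R e) (hfe : SubIdem R f e) :
    SubIdem R (e - f) e :=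
  ⟨by rw [sub_mul, he, hfe.1], by rw [mul_sub, he, hfe.2]⟩

theorem SubIdem.orthIdem_sub {e f : R} (hf : IsIdem R f) (hfe : SubIdem R f e) :
    OrthIdem R f (e - f) :=
  ⟨by rw [mul_sub, hfe.1, hf, sub_self], by rw [sub_mul, hfe.2, hf, sub_self]⟩

section OrthogonalFamily

variable {ι : Type*} {E : ι → R}

theorem subIdem_sum_of_mem (hI : ∀ i, IsIdem R (E i))
    (hO : ∀ i j, i ≠ j → OrthIdem R (E i) (E j)) {T : Finset ι} {j : ι} (hj : j ∈ T) :
    SubIdem R (E j) (∑ i ∈ T, E i) := by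
  constructor
  · rw [Finset.mul_sum, Finset.sum_eq_single_of_mem j hj fun i _ hij => (hO j i hij.symm).1]
    exact hI j
  · rw [Finset.sum_mul, Finset.sum_eq_single_of_mem j hj fun i _ hij => (hO i j hij).1]
    exact hI j

theorem subIdem_sum_of_subset (hI : ∀ i, IsIdem R (E i))
    (hO : ∀ i j, i ≠ j → OrthIdem R (E i) (E j)) {T₁ T₂ : Finset ι} (h : T₁ ⊆ T₂) :
    SubIdem R (∑ i ∈ T₁, E i) (∑ i ∈ T₂, E i) := by
  constructor
  · rw [Finset.sum_mul]
    exact Finset.sum_congr rfl fun j hj => (subIdem_sum_of_mem hI hO (h hj)).1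
  · rw [Finset.mul_sum]
    exact Finset.sum_congr rfl fun j hj => (subIdem_sum_of_mem hI hO (h hj)).2

end OrthogonalFamily

theorem IsPrimIdem.hasPrimDecomp {e : R} (h : IsPrimIdem R e) : HasPrimDecomp R e :=
  ⟨1, fun _ => e, fun _ => h, fun k l hkl => (hkl (Subsingleton.elim k l)).elim, by simp⟩

theorem hasPrimDecomp_sum {ι : Type*} [Fintype ι] {ε : ι → R} (hP : ∀ k, IsPrimIdem R (ε k))
    (hO : ∀ k l, k ≠ l → OrthIdem R (ε k) (ε l)) : HasPrimDecomp R (∑ k, ε k) := by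
  let σ := (Fintype.equivFin ι).symm
  exact ⟨Fintype.card ι, ε ∘ σ, fun k => hP _, fun k l hkl => hO _ _ (σ.injective.ne hkl),
    (σ.sum_comp ε).symm⟩

theorem HasPrimDecomp.add {f g : R} (hf : HasPrimDecomp R f) (hg : HasPrimDecomp R g)
    (hfg : OrthIdem R f g) : HasPrimDecomp R (f + g) := by
  obtain ⟨m, ε, hεP, hεO, rfl⟩ := hf
  obtain ⟨n, δ, hδP, hδO, rfl⟩ := hg
  have hε k : SubIdem R (ε k) (∑ k, ε k) :=
    subIdem_sum_of_mem (fun k => (hεP k).1) hεO (Finset.mem_univ k)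
  have hδ l : SubIdem R (δ l) (∑ l, δ l) :=
    subIdem_sum_of_mem (fun l => (hδP l).1) hδO (Finset.mem_univ l)
  rw [← Fintype.sum_sumElim]
  refine hasPrimDecomp_sum ?_ ?_
  · rintro (k | k)
    exacts [hεP k, hδP k]
  · rintro (k | k) (l | l) hkl
    · exact hεO k l fun h => hkl (congrArg _ h)
    · exact hfg.of_subIdem (hε k) (hδ l)
    · exact hfg.symm.of_subIdem (hδ k) (hε l)
    · exact hδO k l fun h => hkl (congrArg _ h)

end Idempotents

section Corners

variable {A : Type*} [NonUnitalRing A] [Module ℂ A] [SMulCommClass ℂ A A] [IsScalarTower ℂ A A]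

theorem mem_subCorner {e f x : A} : x ∈ subCorner A e f ↔ e * x * f = x := Iff.rfl

theorem mul_mem_subCorner {e f : A} (he : IsIdem A e) (hf : IsIdem A f) (x : A) :
    e * x * f ∈ subCorner A e f := by
  rw [mem_subCorner, ← mul_assoc, ← mul_assoc, he, mul_assoc (e * x), hf]

theorem self_mem_subCorner {e : A} (he : IsIdem A e) : e ∈ subCorner A e e := by
  rw [mem_subCorner, he, he]

theorem mul_eq_of_mem_subCorner_left {e f x : A} (he : IsIdem A e) (hx : x ∈ subCorner A e f) :
    e * x = x := by
  rw [← hx, ← mul_assoc, ← mul_assoc, he]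

theorem mul_eq_of_mem_subCorner_right {e f x : A} (hf : IsIdem A f) (hx : x ∈ subCorner A e f) :
    x * f = x := by
  rw [← hx, mul_assoc, hf]

theorem subCorner_mono {e e' f f' : A} (he : SubIdem A e e') (hf : SubIdem A f f') :
    subCorner A e f ≤ subCorner A e' f' := fun x hx => by
  rw [mem_subCorner, ← hx, ← mul_assoc, ← mul_assoc, he.2, mul_assoc (e * x), hf.1]

theorem subCorner_lt {e f : A} (he : IsIdem A e) (hf : IsIdem A f) (hfe : SubIdem A f e)
    (hne : f ≠ e) : subCorner A f f < subCorner A e e := by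
  refine lt_of_le_of_ne (subCorner_mono hfe hfe) fun h => hne ?_
  have he_mem : e ∈ subCorner A f f := h ▸ self_mem_subCorner he
  rw [← he_mem, hfe.1, hf]

theorem hasPrimDecomp_of_finiteDimensional
    (hFD : ∀ e : A, IsIdem A e → FiniteDimensional ℂ (subCorner A e e)) {e : A}
    (he : IsIdem A e) (hne : e ≠ 0) : HasPrimDecomp A e := by
  induction hn : Module.finrank ℂ (subCorner A e e) using Nat.strong_induction_on
    generalizing e with
  | _ n ih =>
    by_cases hprim : IsPrimIdem A e
    · exact hprim.hasPrimDecomp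
    obtain ⟨f, hf, hfe, hf0, hfne⟩ : ∃ f, IsIdem A f ∧ SubIdem A f e ∧ f ≠ 0 ∧ f ≠ e := by
      simpa [IsPrimIdem, he, hne] using hprim
    have hlt {g : A} (hg : IsIdem A g) (hge : SubIdem A g e) (hgne : g ≠ e) :
        Module.finrank ℂ (subCorner A g g) < n := by
      have := hFD e he
      exact hn ▸ Submodule.finrank_lt_finrank_of_lt (subCorner_lt he hg hge hgne)
    have hg := hfe.isIdem_sub he hf
    have hdf := ih _ (hlt hf hfe hfne) hf hf0 rfl
    have hdg := ih _ (hlt hg (hfe.sub_subIdem he) fun h => hf0 (sub_eq_self.1 h)) hg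
      (sub_ne_zero.2 hfne.symm) rfl
    simpa using hdf.add hdg (hfe.orthIdem_sub hf)

variable {I : Type*} {E : I → A}

theorem mem_iSup_subCorner (hI : ∀ i, IsIdem A (E i)) {T : Finset I} {x : A}
    (hx : (∑ i ∈ T, E i) * x * (∑ j ∈ T, E j) = x) :
    x ∈ ⨆ (i : T) (j : T), subCorner A (E i) (E j) := by
  rw [← hx, Finset.sum_mul, Finset.sum_mul]
  refine Submodule.sum_mem _ fun i hi => ?_
  rw [Finset.mul_sum]
  exact Submodule.sum_mem _ fun j hj => Submodule.mem_iSup_of_mem ⟨i, hi⟩ <|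
    Submodule.mem_iSup_of_mem ⟨j, hj⟩ (mul_mem_subCorner (hI i) (hI j) x)

theorem IsAUFWitness.exists_finset_absorbs (hE : IsAUFWitness A E) (x : A) :
    ∃ T : Finset I, (∑ i ∈ T, E i) * x = x ∧ x * (∑ i ∈ T, E i) = x := by
  classical
  obtain ⟨hI, hO, -, hspan⟩ := hE
  have hx : x ∈ ⨆ ij : I × I, subCorner A (E ij.1) (E ij.2) := by
    rw [iSup_prod, hspan]
    trivial
  refine Submodule.iSup_induction _ (motive := fun x =>
    ∃ T : Finset I, (∑ i ∈ T, E i) * x = x ∧ x * (∑ i ∈ T, E i) = x) hx ?_ ⟨∅, by simp⟩ ?_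
  · intro ij y hy
    refine ⟨{ij.1, ij.2}, ?_, ?_⟩
    · exact (subIdem_sum_of_mem hI hO (by simp)).mul_eq_of_mul_eq_left
        (mul_eq_of_mem_subCorner_left (hI _) hy)
    · exact (subIdem_sum_of_mem hI hO (by simp)).mul_eq_of_mul_eq_right
        (mul_eq_of_mem_subCorner_right (hI _) hy)
  · rintro y z hy hz
    obtain ⟨T₁, hy₁, hy₂⟩ := hy
    obtain ⟨T₂, hz₁, hz₂⟩ := hz
    have h₁ := subIdem_sum_of_subset hI hO (Finset.subset_union_left : T₁ ⊆ T₁ ∪ T₂)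
    have h₂ := subIdem_sum_of_subset hI hO (Finset.subset_union_right : T₂ ⊆ T₁ ∪ T₂)
    refine ⟨T₁ ∪ T₂, ?_, ?_⟩
    · rw [mul_add, h₁.mul_eq_of_mul_eq_left hy₁, h₂.mul_eq_of_mul_eq_left hz₁]
    · rw [add_mul, h₁.mul_eq_of_mul_eq_right hy₂, h₂.mul_eq_of_mul_eq_right hz₂]

theorem IsAUFWitness.finiteDimensional_subCorner (hE : IsAUFWitness A E) (e f : A) :
    FiniteDimensional ℂ (subCorner A e f) := by
  classical
  obtain ⟨T₁, he, -⟩ := hE.exists_finset_absorbs e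
  obtain ⟨T₂, -, hf⟩ := hE.exists_finset_absorbs f
  obtain ⟨hI, hO, hfin, -⟩ := hE
  have he' : (∑ i ∈ T₁ ∪ T₂, E i) * e = e :=
    (subIdem_sum_of_subset hI hO Finset.subset_union_left).mul_eq_of_mul_eq_left he
  have hf' : f * (∑ i ∈ T₁ ∪ T₂, E i) = f :=
    (subIdem_sum_of_subset hI hO Finset.subset_union_right).mul_eq_of_mul_eq_right hf
  refine Submodule.finiteDimensional_of_le (fun x hx => mem_iSup_subCorner hI (T := T₁ ∪ T₂) ?_)
  rw [← mem_subCorner.1 hx, ← mul_assoc, ← mul_assoc, he', mul_assoc (e * x), hf']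

end Corners

/-- In an AUF algebra: (a) all corners `eAf` at idempotents are
finite-dimensional; (b) every nonzero idempotent has a finite orthogonal primitive
decomposition. -/
theorem stmt_6 {A : Type u} [NonUnitalRing A] [Module ℂ A] [SMulCommClass ℂ A A]
    [IsScalarTower ℂ A A] (hA : IsAUF A) :
    (∀ e f : A, IsIdem A e → IsIdem A f → FiniteDimensional ℂ (subCorner A e f)) ∧
    (∀ e : A, IsIdem A e → e ≠ 0 →
      ∃ (n : ℕ) (ε : Fin n → A),
        (∀ k, IsPrimIdem A (ε k)) ∧ (∀ k l, k ≠ l → OrthIdem A (ε k) (ε l)) ∧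
        e = ∑ k, ε k) := by
  obtain ⟨I, E, hE⟩ := hA
  have hfin := hE.finiteDimensional_subCorner
  exact ⟨fun e f _ _ => hfin e f,
    fun e he hne => hasPrimDecomp_of_finiteDimensional (fun e _ => hfin e e) he hne⟩
end

section
/- Let A be an AUF algebra and e ∈ A a generating idempotent, so that eAe = {x ∈ A : exe = x} is a unital finite-dimensional ℂ-algebra with unit e. Let n ≥ 1, let M_n(eAe) be the algebra of n×n matrices over eAe, let p ∈ M_n(eAe) be a generating idempotent of the unital finite-dimensional algebra M_n(eAe), and set B = p M_n(eAe) p = {b ∈ M_n(eAe) : pbp = b}. Then the map Θ : SLF(A) → SLF(B) defined by Θ(ψ)(b) = Σ_{k=1}^n ψ(b_{kk}) (where b_{kk} ∈ eAe ⊆ A are the diagonal entries of b) is well defined (Θ(ψ) is indeed a symmetric linear functional on B) and is a ℂ-linear bijection from SLF(A) onto SLF(B). -/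
open scoped BigOperators

universe u v

section Stmt15

variable {A : Type u} [NonUnitalRing A] [Module ℂ A] [SMulCommClass ℂ A A] [IsScalarTower ℂ A A]

/-- The map `Θ(ψ)(b) = Σ_k ψ(b_{kk})` on the corner `B = p M_n(eAe) p`. -/
noncomputable def Theta {n : ℕ} (p : Matrix (Fin n) (Fin n) A) (ψ : A →ₗ[ℂ] ℂ) :
    ↥(subCorner (Matrix (Fin n) (Fin n) A) p p) →ₗ[ℂ] ℂ where
  toFun b := ∑ k, ψ (b.1 k k)
  map_add' x y := by
    simp only [Submodule.coe_add, Matrix.add_apply, map_add, Finset.sum_add_distrib]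
  map_smul' c x := by
    simp only [SetLike.val_smul, Matrix.smul_apply, map_smul, RingHom.id_apply,
      smul_eq_mul, Finset.mul_sum]

end Stmt15

/-!
Θ is the composite of three Morita-type bijections: restriction `SLF(A) → SLF(eAe)`, the trace
`SLF(eAe) → SLF(M_n(eAe))`, and restriction `SLF(M_n(eAe)) → SLF(B)`. What makes the restrictions
bijective is fullness: a generating idempotent `e` factors every idempotent `f` with
finite-dimensional corner as `f = ∑ₛ aₛ e bₛ`, since `f` splits into primitive idempotents, each
equivalent to a summand of `e`. This applies to the `E i` of the AUF family in `A`, and to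
`diag(e, …, e)` with respect to `p` in `M_n(A)`. Given such a factorization, an SLF vanishing on
`eRe` vanishes on `fR` (injectivity), and a trace `φ` on `eRe` extends to the trace
`x ↦ ∑ₛ φ(e bₛ x aₛ e)` on `fRf` (surjectivity); on `A` the extensions to the diagonal corners
`E i A E i` are glued along the direct sum decomposition `A = ⨁ E i A E j`.
-/

open Finset

section Corner

variable {R : Type u} [NonUnitalRing R]

theorem IsIdem.mul_corner {f g x : R} (hf : IsIdem R f) (hx : f * x * g = x) : f * x = x := by
  rw [← hx, ← mul_assoc, ← mul_assoc, hf]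

theorem IsIdem.corner_mul {f g x : R} (hg : IsIdem R g) (hx : f * x * g = x) : x * g = x := by
  rw [← hx, mul_assoc, hg]

theorem mul_mem_corner {f f' g g' x y : R} (hf : IsIdem R f) (hg : IsIdem R g)
    (hx : f * x * f' = x) (hy : g' * y * g = y) : f * (x * y) * g = x * y := by
  rw [← mul_assoc, hf.mul_corner hx, mul_assoc, hg.corner_mul hy]

theorem SubIdem.trans {a b c : R} (hab : SubIdem R a b) (hbc : SubIdem R b c) :
    SubIdem R a c :=
  ⟨by rw [← hab.1, mul_assoc, hbc.1], by rw [← hab.2, ← mul_assoc, hbc.2]⟩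

theorem subIdem_sum {m : ℕ} {ε : Fin m → R} (hε : ∀ k, IsIdem R (ε k))
    (horth : ∀ k l, k ≠ l → OrthIdem R (ε k) (ε l)) (k : Fin m) :
    SubIdem R (ε k) (∑ l, ε l) := by
  constructor
  · rw [mul_sum, sum_eq_single k (fun l _ hl => (horth k l hl.symm).1) (by simp)]
    exact hε k
  · rw [sum_mul, sum_eq_single k (fun l _ hl => (horth l k hl).1) (by simp)]
    exact hε k

theorem exists_subIdem_of_not_isPrimIdem {f : R} (hf : IsIdem R f) (hf0 : f ≠ 0)
    (h : ¬ IsPrimIdem R f) : ∃ g, IsIdem R g ∧ SubIdem R g f ∧ g ≠ 0 ∧ g ≠ f := by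
  simp only [IsPrimIdem, not_and, not_forall, not_or] at h
  obtain ⟨g, hg, hgf, hne⟩ := h hf hf0
  exact ⟨g, hg, hgf, hne⟩

theorem SubIdem.sub {g f : R} (hf : IsIdem R f) (hg : IsIdem R g) (hgf : SubIdem R g f) :
    IsIdem R (f - g) ∧ SubIdem R (f - g) f := by
  have hf' : f * f = f := hf
  have hg' : g * g = g := hg
  refine ⟨?_, ?_, ?_⟩
  · show (f - g) * (f - g) = f - g
    simp only [sub_mul, mul_sub, hf', hg', hgf.1, hgf.2, sub_self, sub_zero]
  · simp only [sub_mul, hf', hgf.1]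
  · simp only [mul_sub, hf', hgf.2]

def FactorsThrough (f g : R) : Prop :=
  ∃ (m : ℕ) (a b : Fin m → R), ∑ s, a s * f * b s = g

theorem FactorsThrough.zero (f : R) : FactorsThrough f 0 :=
  ⟨0, ![], ![], by simp⟩

theorem FactorsThrough.add {f g g' : R} (hg : FactorsThrough f g) (hg' : FactorsThrough f g') :
    FactorsThrough f (g + g') := by
  obtain ⟨m, a, b, rfl⟩ := hg
  obtain ⟨m', a', b', rfl⟩ := hg'
  exact ⟨m + m', Fin.append a a', Fin.append b b', by simp [Fin.sum_univ_add]⟩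

theorem IdemEquiv.factorsThrough {q ε f : R} (h : IdemEquiv R q ε) (hεf : ε * f = ε) :
    FactorsThrough f q := by
  obtain ⟨u, v, hu, -, huv, -⟩ := h
  have huf : u * f = u := by rw [← hu, mul_assoc, hεf]
  exact ⟨1, ![u], ![v], by simp [huf, huv]⟩

section FiniteDimensional

variable [Module ℂ R] [SMulCommClass ℂ R R] [IsScalarTower ℂ R R]

theorem subCorner_le_subCorner {f g : R} (hf : IsIdem R f) (hg : f * g * f = g) :
    subCorner R g g ≤ subCorner R f f := fun x (hx : g * x * g = x) => show f * x * f = x by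
  rw [← hx, ← mul_assoc, ← mul_assoc, hf.mul_corner hg, mul_assoc, hf.corner_mul hg]

theorem subCorner_lt_of_subIdem {f g : R} (hf : IsIdem R f) (hg : IsIdem R g)
    (hgf : SubIdem R g f) (hne : g ≠ f) : subCorner R g g < subCorner R f f := by
  refine lt_of_le_of_ne (subCorner_le_subCorner hf (by rw [hgf.2, hgf.1])) fun h => hne ?_
  have hmem : f ∈ subCorner R g g := h ▸ show f * f * f = f by rw [hf, hf]
  have hgfg : g * f * g = g := by rw [hgf.1, hg]
  exact hgfg.symm.trans hmem

theorem factorsThrough_of_finiteDimensional {e f : R} (hf : IsIdem R f)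
    [FiniteDimensional ℂ (subCorner R f f)]
    (hprim : ∀ q, IsPrimIdem R q → SubIdem R q f → FactorsThrough e q) : FactorsThrough e f := by
  induction hN : Module.finrank ℂ (subCorner R f f) using Nat.strong_induction_on
    generalizing f with
  | _ N ih =>
  by_cases hf0 : f = 0
  · exact hf0 ▸ FactorsThrough.zero e
  by_cases hfp : IsPrimIdem R f
  · exact hprim f hfp ⟨hf, hf⟩
  obtain ⟨g, hg, hgf, hg0, hgf'⟩ := exists_subIdem_of_not_isPrimIdem hf hf0 hfp
  have proper : ∀ k, IsIdem R k → SubIdem R k f → k ≠ f → FactorsThrough e k := by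
    intro k hk hkf hne
    have hlt := subCorner_lt_of_subIdem hf hk hkf hne
    have := Submodule.finiteDimensional_of_le hlt.le
    exact ih _ (hN ▸ Submodule.finrank_lt_finrank_of_lt hlt) hk
      (fun q hq hqk => hprim q hq (hqk.trans hkf)) rfl
  obtain ⟨hh, hhf⟩ := hgf.sub hf hg
  have hhf' : f - g ≠ f := fun h => hg0 (by simpa using h)
  simpa using (proper g hg hgf hgf').add (proper _ hh hhf hhf')

end FiniteDimensional

end Corner

section TraceExtension

variable {R : Type u} [NonUnitalRing R] [Module ℂ R]

def IsTraceOn (f : R) (φ : R →ₗ[ℂ] ℂ) : Prop :=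
  ∀ x y, f * x * f = x → f * y * f = y → φ (x * y) = φ (y * x)

theorem IsSLF.eq_zero_of_factorsThrough {f g : R} {δ : R →ₗ[ℂ] ℂ} (hδ : IsSLF R δ)
    (hf : IsIdem R f) (hδf : ∀ x, f * x * f = x → δ x = 0) (hfg : FactorsThrough f g) {x : R} (hx : g * x = x) :
    δ x = 0 := by
  obtain ⟨m, a, b, rfl⟩ := hfg
  have hf' : f * f = f := hf
  rw [← hx, sum_mul, map_sum]
  refine sum_eq_zero fun s _ => ?_
  have hsplit : a s * f * b s * x = (a s * f) * (f * b s * x) := by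
    simp only [mul_assoc, ← mul_assoc f f, hf']
  rw [hsplit, hδ, hδf]
  simp only [mul_assoc, ← mul_assoc f f, hf']

variable [SMulCommClass ℂ R R] [IsScalarTower ℂ R R]

def cornerProj {f : R} (hf : IsIdem R f) : R →ₗ[ℂ] subCorner R f f :=
  LinearMap.codRestrict _ (LinearMap.mulLeftRight ℂ (f, f)) fun x => by
    show f * (f * x * f) * f = f * x * f
    rw [← mul_assoc, ← mul_assoc, hf, mul_assoc, hf]

theorem cornerProj_apply_of_mem {f x : R} (hf : IsIdem R f) (hx : f * x * f = x) :
    cornerProj hf x = ⟨x, hx⟩ :=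
  Subtype.ext hx

theorem isTraceOn_comp_cornerProj {f : R} (hf : IsIdem R f) {φ : subCorner R f f →ₗ[ℂ] ℂ}
    (hφ : ∀ (x y : R), x ∈ subCorner R f f → y ∈ subCorner R f f → ∀
      (hxy : x * y ∈ subCorner R f f) (hyx : y * x ∈ subCorner R f f),
      φ ⟨x * y, hxy⟩ = φ ⟨y * x, hyx⟩) :
    IsTraceOn f (φ ∘ₗ cornerProj hf) := fun x y hx hy => by
  simp only [LinearMap.comp_apply, cornerProj_apply_of_mem hf (mul_mem_corner hf hf hx hy),
    cornerProj_apply_of_mem hf (mul_mem_corner hf hf hy hx)]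
  exact hφ x y hx hy _ _

/-- The extension of a trace on `fRf` to `gRg` along a factorization `g = ∑ₛ aₛ f bₛ`. -/
def traceExtend (f : R) {m : ℕ} (a b : Fin m → R) (φ : R →ₗ[ℂ] ℂ) : R →ₗ[ℂ] ℂ :=
  ∑ s, φ ∘ₗ LinearMap.mulLeftRight ℂ (f * b s, a s * f)

theorem traceExtend_apply (f : R) {m : ℕ} (a b : Fin m → R) (φ : R →ₗ[ℂ] ℂ) (x : R) :
    traceExtend f a b φ x = ∑ s, φ (f * b s * x * (a s * f)) := by
  simp [traceExtend, LinearMap.mulLeftRight_apply]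

variable {f g g' : R} {m m' : ℕ} {a b : Fin m → R} {a' b' : Fin m' → R} {φ : R →ₗ[ℂ] ℂ}

theorem traceExtend_mul_eq (hf : IsIdem R f) (hφ : IsTraceOn f φ)
    (hab : ∑ s, a s * f * b s = g) {x y : R} (hx : x * f = x) (hy : f * y = y)
    (hyg : y * g = y) :
    traceExtend f a b φ (x * y) = φ (y * x) := by
  have hf' : f * f = f := hf
  calc traceExtend f a b φ (x * y)
      = ∑ s, φ ((f * b s * x) * (y * a s * f)) := by
        rw [traceExtend_apply]; simp only [mul_assoc]
    _ = ∑ s, φ ((y * a s * f) * (f * b s * x)) := by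
        refine sum_congr rfl fun s _ => hφ _ _ ?_ ?_
        · rw [← mul_assoc, ← mul_assoc, hf', mul_assoc, hx]
        · rw [← mul_assoc, ← mul_assoc, hy, mul_assoc, hf']
    _ = φ (y * g * x) := by
        rw [← map_sum, ← hab, mul_sum, sum_mul]
        simp only [mul_assoc, ← mul_assoc f f, hf']
    _ = φ (y * x) := by rw [hyg]

theorem traceExtend_mul_comm (hf : IsIdem R f) (hφ : IsTraceOn f φ)
    (hab : ∑ s, a s * f * b s = g) (hab' : ∑ r, a' r * f * b' r = g')
    {x y : R} (hx : x * g' = x) (hy : y * g = y) :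
    traceExtend f a b φ (x * y) = traceExtend f a' b' φ (y * x) := by
  have hf' : f * f = f := hf
  have hxy : x * y = ∑ r, (x * a' r * f) * (f * b' r * y) := by
    conv_lhs => rw [← hx, ← hab', mul_sum, sum_mul]
    simp only [mul_assoc, ← mul_assoc f f, hf']
  rw [hxy, map_sum, traceExtend_apply]
  refine sum_congr rfl fun r _ => ?_
  rw [traceExtend_mul_eq hf hφ hab (by rw [mul_assoc, hf'])
    (by simp only [← mul_assoc, hf']) (by rw [mul_assoc, hy])]
  simp only [mul_assoc]

theorem traceExtend_apply_of_mem (hf : IsIdem R f) (hφ : IsTraceOn f φ)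
    (hab : ∑ s, a s * f * b s = g) (hfg : f * g = f) {z : R} (hz : f * z * f = z) :
    traceExtend f a b φ z = φ z := by
  have hzf : z * f = z := hf.corner_mul hz
  have h := traceExtend_mul_eq hf hφ hab hf (hf.mul_corner hz)
    (by rw [← hzf, mul_assoc, hfg])
  rwa [hf.mul_corner hz, hzf] at h

end TraceExtension

namespace IsAUFWitness

variable {R : Type u} [NonUnitalRing R] [Module ℂ R] [SMulCommClass ℂ R R] [IsScalarTower ℂ R R]
  {I : Type v} {E : I → R}

theorem mul_eq_zero_of_ne (hW : IsAUFWitness R E) {i j k l : I} {x y : R}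
    (hx : E i * x * E j = x) (hy : E k * y * E l = y) (hjk : j ≠ k) : x * y = 0 := by
  rw [← (hW.1 j).corner_mul hx, ← (hW.1 k).mul_corner hy, mul_assoc, ← mul_assoc (E j),
    (hW.2.1 j k hjk).1, zero_mul, mul_zero]

theorem induction_on (hW : IsAUFWitness R E) {motive : R → Prop} (x : R)
    (corner : ∀ i j x, E i * x * E j = x → motive x) (zero : motive 0)
    (add : ∀ x y, motive x → motive y → motive (x + y)) : motive x := by
  have hx : x ∈ ⨆ i, ⨆ j, subCorner R (E i) (E j) := hW.2.2.2 ▸ Submodule.mem_top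
  refine Submodule.iSup_induction (motive := motive) _ hx (fun i y hy => ?_) zero add
  exact Submodule.iSup_induction (motive := motive) _ hy (corner i) zero add

theorem linearMap_eq_zero (hW : IsAUFWitness R E) {δ : R →ₗ[ℂ] ℂ}
    (h : ∀ i j x, E i * x * E j = x → δ x = 0) : δ = 0 :=
  LinearMap.ext fun x => hW.induction_on x h (map_zero δ) fun x y hx hy => by
    rw [map_add, hx, hy, add_zero]

theorem isSLF_of_corners (hW : IsAUFWitness R E) {ψ : R →ₗ[ℂ] ℂ}
    (h : ∀ i j k l x y, E i * x * E j = x → E k * y * E l = y → ψ (x * y) = ψ (y * x)) :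
    IsSLF R ψ := fun x y =>
  hW.induction_on x
    (fun i j x hx => hW.induction_on y (fun k l y hy => h i j k l x y hx hy) (by simp)
      fun y y' hy hy' => by rw [mul_add, add_mul, map_add, map_add, hy, hy'])
    (by simp) fun x x' hx hx' => by rw [mul_add, add_mul, map_add, map_add, hx, hx']

theorem iSupIndep_subCorner (hW : IsAUFWitness R E) :
    iSupIndep fun μ : I × I => subCorner R (E μ.1) (E μ.2) := by
  intro μ
  rw [Submodule.disjoint_def]
  intro x (hx : E μ.1 * x * E μ.2 = x) hx'
  let P := LinearMap.mulLeftRight ℂ (E μ.1, E μ.2)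
  have hker : (⨆ ν, ⨆ (_ : ν ≠ μ), subCorner R (E ν.1) (E ν.2)) ≤ LinearMap.ker P := by
    refine iSup_le fun ν => iSup_le fun hν y (hy : E ν.1 * y * E ν.2 = y) => ?_
    rw [LinearMap.mem_ker, LinearMap.mulLeftRight_apply]
    by_cases h1 : μ.1 = ν.1
    · rw [← hy]
      simp only [mul_assoc]
      rw [((hW.2.1 ν.2 μ.2) fun h2 => hν (Prod.ext h1.symm h2)).1, mul_zero, mul_zero, mul_zero]
    · rw [← hy]
      simp only [← mul_assoc]
      rw [(hW.2.1 μ.1 ν.1 h1).1, zero_mul, zero_mul, zero_mul]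
  have h0 : P x = 0 := hker hx'
  rwa [LinearMap.mulLeftRight_apply, hx] at h0

theorem exists_linearMap (hW : IsAUFWitness R E) (F : I → I → R →ₗ[ℂ] ℂ) :
    ∃ ψ : R →ₗ[ℂ] ℂ, ∀ i j x, E i * x * E j = x → ψ x = F i j x := by
  classical
  have htop : ⨆ μ : I × I, subCorner R (E μ.1) (E μ.2) = ⊤ := by rw [iSup_prod]; exact hW.2.2.2
  let D := hW.iSupIndep_subCorner.linearEquiv htop
  refine ⟨DFinsupp.lsum ℕ (fun μ => F μ.1 μ.2 ∘ₗ (subCorner R (E μ.1) (E μ.2)).subtype) ∘ₗ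
    D.symm.toLinearMap, fun i j x hx => ?_⟩
  rw [LinearMap.comp_apply, LinearEquiv.coe_coe,
    hW.iSupIndep_subCorner.linearEquiv_symm_apply htop (i := (i, j)) hx, DFinsupp.lsum_single]
  rfl

theorem exists_finiteDimensional_mul_mul_mem (hW : IsAUFWitness R E) (y y' : R) :
    ∃ W : Submodule ℂ R, FiniteDimensional ℂ W ∧ ∀ z, y * z * y' ∈ W := by
  refine hW.induction_on (motive := fun y => ∃ W : Submodule ℂ R, FiniteDimensional ℂ W ∧
    ∀ z, y * z * y' ∈ W) y (fun i j y hy => ?_) ⟨⊥, inferInstance, by simp⟩ ?_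
  · refine hW.induction_on (motive := fun y' => ∃ W : Submodule ℂ R, FiniteDimensional ℂ W ∧
      ∀ z, y * z * y' ∈ W) y' (fun k l y' hy' => ⟨_, hW.2.2.1 i l, fun z => ?_⟩)
      ⟨⊥, inferInstance, by simp⟩ ?_
    · show E i * (y * z * y') * E l = y * z * y'
      rw [← mul_assoc, ← mul_assoc, (hW.1 i).mul_corner hy, mul_assoc, (hW.1 l).corner_mul hy']
    · rintro y₁ y₂ ⟨W₁, _, hW₁⟩ ⟨W₂, _, hW₂⟩
      exact ⟨W₁ ⊔ W₂, inferInstance, fun z => mul_add (y * z) y₁ y₂ ▸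
        Submodule.add_mem_sup (hW₁ z) (hW₂ z)⟩
  · rintro y₁ y₂ ⟨W₁, _, hW₁⟩ ⟨W₂, _, hW₂⟩
    exact ⟨W₁ ⊔ W₂, inferInstance, fun z => by
      rw [add_mul, add_mul]; exact Submodule.add_mem_sup (hW₁ z) (hW₂ z)⟩

theorem finiteDimensional_subCorner_s15 (hW : IsAUFWitness R E) (e : R) :
    FiniteDimensional ℂ (subCorner R e e) := by
  obtain ⟨W, _, hW'⟩ := hW.exists_finiteDimensional_mul_mul_mem e e
  exact Submodule.finiteDimensional_of_le fun x (hx : e * x * e = x) => hx ▸ hW' x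

end IsAUFWitness

section Generating

variable {R : Type u} [NonUnitalRing R] [Module ℂ R] [SMulCommClass ℂ R R] [IsScalarTower ℂ R R]

theorem IsGenIdem.factorsThrough {e f : R} (he : IsGenIdem R e) (hf : IsIdem R f)
    [FiniteDimensional ℂ (subCorner R f f)] : FactorsThrough e f := by
  obtain ⟨-, m, ε, hε, horth, rfl, hequiv⟩ := he
  refine factorsThrough_of_finiteDimensional hf fun q hq _ => ?_
  obtain ⟨k, hk⟩ := hequiv q hq
  exact hk.factorsThrough (subIdem_sum (fun k => (hε k).1) horth k).1

theorem IsGenIdemIn.factorsThrough {f p : R} (hp : IsGenIdemIn R f p) (hf : IsIdem R f)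
    [FiniteDimensional ℂ (subCorner R f f)] : FactorsThrough p f := by
  obtain ⟨-, m, π, hπ, horth, rfl, hequiv⟩ := hp
  refine factorsThrough_of_finiteDimensional hf fun q hq hqf => ?_
  have hq' : IsPrimIdemIn R f q :=
    ⟨⟨hq.1, by rw [hqf.2, hqf.1]⟩, hq.2.1, fun g hg hgq => hq.2.2 g hg.1 hgq⟩
  obtain ⟨k, u, v, -, -, hu, hv, huv, hvu⟩ := hequiv q hq'
  exact IdemEquiv.factorsThrough ⟨u, v, hu, hv, huv, hvu⟩
    (subIdem_sum (fun k => (hπ k).1.1) horth k).1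

end Generating

namespace IsAUFWitness

variable {R : Type u} [NonUnitalRing R] [Module ℂ R] [SMulCommClass ℂ R R] [IsScalarTower ℂ R R]
  {I : Type v} {E : I → R} {e : R} {Ψ ψ : R →ₗ[ℂ] ℂ} {m : I → ℕ} {a b : ∀ i, Fin (m i) → R}

theorem factorsThrough_of_isGenIdem (hW : IsAUFWitness R E) (hgen : IsGenIdem R e) (i : I) :
    FactorsThrough e (E i) :=
  have := hW.2.2.1 i i
  hgen.factorsThrough (hW.1 i)

theorem isSLF_of_eq_traceExtend (hW : IsAUFWitness R E) (he : IsIdem R e) (hΨ : IsTraceOn e Ψ)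
    (hab : ∀ i, ∑ s, a i s * e * b i s = E i)
    (hdiag : ∀ i x, E i * x * E i = x → ψ x = traceExtend e (a i) (b i) Ψ x)
    (hoff : ∀ i j x, i ≠ j → E i * x * E j = x → ψ x = 0) : IsSLF R ψ := by
  refine hW.isSLF_of_corners fun i j k l x y hx hy => ?_
  by_cases hil : i = l
  · subst hil
    by_cases hjk : j = k
    · subst hjk
      rw [hdiag i _ (mul_mem_corner (hW.1 i) (hW.1 i) hx hy),
        hdiag j _ (mul_mem_corner (hW.1 j) (hW.1 j) hy hx)]
      exact traceExtend_mul_comm he hΨ (hab i) (hab j) ((hW.1 j).corner_mul hx)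
        ((hW.1 i).corner_mul hy)
    · rw [hW.mul_eq_zero_of_ne hx hy hjk, map_zero,
        hoff k j _ (Ne.symm hjk) (mul_mem_corner (hW.1 k) (hW.1 j) hy hx)]
  · rw [hoff i l _ hil (mul_mem_corner (hW.1 i) (hW.1 l) hx hy),
      hW.mul_eq_zero_of_ne hy hx (Ne.symm hil), map_zero]

theorem apply_eq_of_eq_traceExtend (hW : IsAUFWitness R E) (he : IsIdem R e) (hΨ : IsTraceOn e Ψ)
    (hab : ∀ i, ∑ s, a i s * e * b i s = E i) (hψ : IsSLF R ψ)
    (hdiag : ∀ i x, E i * x * E i = x → ψ x = traceExtend e (a i) (b i) Ψ x)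
    {z : R} (hz : e * z * e = z) : ψ z = Ψ z := by
  have hez : e * z = z := he.mul_corner hz
  have hze : z * e = z := he.corner_mul hz
  suffices key : ∀ w, ψ (w * z) = Ψ (z * w * e) by
    conv_lhs => rw [← hez]
    rw [key, hze, hze]
  refine fun w => hW.induction_on (motive := fun w => ψ (w * z) = Ψ (z * w * e)) w
    (fun i j w hw => ?_) (by simp) fun w w' h h' => by rw [add_mul, map_add, h, h', mul_add, add_mul, map_add]
  have hEw : E i * w = w := (hW.1 i).mul_corner hw
  have hEE : E i * E i = E i := hW.1 i
  have hmem : E i * ((w * e) * (z * E i)) * E i = (w * e) * (z * E i) := by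
    simp only [← mul_assoc, hEw, mul_assoc _ (E i) (E i), hEE]
  calc ψ (w * z) = ψ (E i * (w * e * z)) := by rw [mul_assoc w, hez, ← mul_assoc, hEw]
    _ = ψ ((w * e) * (z * E i)) := by rw [hψ, mul_assoc]
    _ = Ψ (z * E i * (w * e)) := by
        rw [hdiag i _ hmem]
        exact traceExtend_mul_eq he hΨ (hab i) (by rw [mul_assoc, he]) (by rw [← mul_assoc, hez])
          (by rw [mul_assoc, hEE])
    _ = Ψ (z * w * e) := by rw [mul_assoc z, ← mul_assoc (E i), hEw, mul_assoc]

theorem exists_isSLF_eq_of_isTraceOn (hW : IsAUFWitness R E) (he : IsIdem R e)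
    (hΨ : IsTraceOn e Ψ) (hfull : ∀ i, FactorsThrough e (E i)) :
    ∃ ψ : R →ₗ[ℂ] ℂ, IsSLF R ψ ∧ ∀ z, e * z * e = z → ψ z = Ψ z := by
  classical
  choose m a b hab using hfull
  obtain ⟨ψ, hψ⟩ := hW.exists_linearMap fun i j =>
    if i = j then traceExtend e (a i) (b i) Ψ else 0
  have hdiag : ∀ i x, E i * x * E i = x → ψ x = traceExtend e (a i) (b i) Ψ x :=
    fun i x hx => by simp [hψ i i x hx]
  have hoff : ∀ i j x, i ≠ j → E i * x * E j = x → ψ x = 0 :=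
    fun i j x hij hx => by simp [hψ i j x hx, hij]
  have hSLF := hW.isSLF_of_eq_traceExtend he hΨ hab hdiag hoff
  exact ⟨ψ, hSLF, fun z hz => hW.apply_eq_of_eq_traceExtend he hΨ hab hSLF hdiag hz⟩

end IsAUFWitness

section Matrix

open Matrix

variable {A : Type u} [NonUnitalRing A] {ι : Type*} [Fintype ι]

theorem IsSLF.comp_trace [Module ℂ A] {ψ : A →ₗ[ℂ] ℂ} (hψ : IsSLF A ψ) :
    IsSLF (Matrix ι ι A) (ψ ∘ₗ traceLinearMap ι ℂ A) := fun X Y => by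
  simp only [LinearMap.comp_apply, traceLinearMap_apply, trace, Matrix.diag, mul_apply, map_sum]
  rw [sum_comm]
  exact sum_congr rfl fun j _ => sum_congr rfl fun k _ => hψ _ _

variable [DecidableEq ι]

theorem isIdem_diagonal {e : A} (he : IsIdem A e) : IsIdem (Matrix ι ι A) (diagonal fun _ => e) :=
  (diagonal_mul_diagonal _ _).trans (congrArg diagonal (funext fun _ => he))

theorem diagonal_mul_mul_diagonal_apply (e : A) (X : Matrix ι ι A) (k l : ι) :
    ((diagonal fun _ => e) * X * diagonal fun _ => e : Matrix ι ι A) k l = e * X k l * e := by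
  rw [mul_diagonal, diagonal_mul]

theorem single_mul_diagonal_const (i j : ι) (x e : A) :
    single i j x * diagonal (fun _ => e) = single i j (x * e) := by
  ext k l
  simp [mul_diagonal, single_apply, ite_mul]

theorem diagonal_const_mul_single (i j : ι) (x e : A) :
    diagonal (fun _ => e) * single i j x = single i j (e * x) := by
  ext k l
  simp [diagonal_mul, single_apply, mul_ite]

theorem mul_trace_mul_of_corner {e : A} {X : Matrix ι ι A}
    (hX : (diagonal fun _ => e) * X * (diagonal fun _ => e) = X) : e * X.trace * e = X.trace := by
  simp only [trace, Matrix.diag, mul_sum, sum_mul]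
  exact sum_congr rfl fun k _ => by rw [← diagonal_mul_mul_diagonal_apply, hX]

variable [Module ℂ A]

/-- Conjugating by the matrix units `single i₀ k e` moves the diagonal of `X` into the
`(i₀, i₀)` entry. -/
theorem apply_single_trace {e : A} (he : IsIdem A e) {Φ : Matrix ι ι A →ₗ[ℂ] ℂ}
    (hΦ : ∀ X Y, X * diagonal (fun _ => e) = X → Y * diagonal (fun _ => e) = Y →
      Φ (X * Y) = Φ (Y * X))
    (i₀ : ι) {X : Matrix ι ι A} (hX : (diagonal fun _ => e) * X * (diagonal fun _ => e) = X) :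
    Φ (single i₀ i₀ X.trace) = Φ X := by
  have hE := isIdem_diagonal (ι := ι) he
  have he' : e * e = e := he
  calc Φ (single i₀ i₀ X.trace) = ∑ k, Φ ((single i₀ k e * X) * single k i₀ e) := by
        simp only [single_mul_mul_single, ← diagonal_mul_mul_diagonal_apply, hX, ← map_sum]
        exact congrArg Φ (map_sum (singleLinearMap ℂ i₀ i₀) (fun k => X k k) univ)
    _ = ∑ k, Φ (single k i₀ e * (single i₀ k e * X)) := sum_congr rfl fun k _ =>
        hΦ _ _ (by rw [mul_assoc, hE.corner_mul hX]) (by rw [single_mul_diagonal_const, he'])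
    _ = Φ (diagonal (fun _ => e) * X) := by
        simp only [← mul_assoc, single_mul_single_same, he', ← map_sum, ← sum_mul,
          sum_single_eq_diagonal]
    _ = Φ X := by rw [hE.mul_corner hX]

variable [SMulCommClass ℂ A A] [IsScalarTower ℂ A A]

theorem finiteDimensional_subCorner_diagonal {e : A} [FiniteDimensional ℂ (subCorner A e e)] :
    FiniteDimensional ℂ
      (subCorner (Matrix ι ι A) (diagonal fun _ => e) (diagonal fun _ => e)) := by
  let entries : subCorner (Matrix ι ι A) (diagonal fun _ => e) (diagonal fun _ => e) →ₗ[ℂ]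
      ι → ι → subCorner A e e :=
    { toFun := fun X k l => ⟨X.1 k l, by
        show e * X.1 k l * e = X.1 k l
        rw [← diagonal_mul_mul_diagonal_apply, X.2]⟩
      map_add' := fun _ _ => rfl
      map_smul' := fun _ _ => rfl }
  exact FiniteDimensional.of_injective entries fun X Y h =>
    Subtype.ext (Matrix.ext fun k l => congrArg Subtype.val (congrFun (congrFun h k) l))

theorem IsAUFWitness.factorsThrough_diagonal {I : Type v} {E : I → A} (hW : IsAUFWitness A E)
    {e : A} (he : IsIdem A e) {p : Matrix ι ι A}
    (hp : IsGenIdemIn (Matrix ι ι A) (diagonal fun _ => e) p) :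
    FactorsThrough p (diagonal fun _ => e) :=
  have := hW.finiteDimensional_subCorner_s15 e
  have := finiteDimensional_subCorner_diagonal (ι := ι) (e := e)
  hp.factorsThrough (isIdem_diagonal he)

end Matrix

section Theta

open Matrix

variable {A : Type u} [NonUnitalRing A] [Module ℂ A] [SMulCommClass ℂ A A] [IsScalarTower ℂ A A]
  {n : ℕ} {p : Matrix (Fin n) (Fin n) A}

theorem Theta_apply (ψ : A →ₗ[ℂ] ℂ) (b : subCorner (Matrix (Fin n) (Fin n) A) p p) :
    Theta p ψ b = ψ b.1.trace := by
  simp [Theta, trace, map_sum]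

variable {I : Type v} {E : I → A} {e : A}

theorem eq_of_Theta_eq (hW : IsAUFWitness A E) (hgen : IsGenIdem A e) (i₀ : Fin n)
    (hp : IsGenIdemIn (Matrix (Fin n) (Fin n) A) (diagonal fun _ => e) p)
    {ψ₁ ψ₂ : A →ₗ[ℂ] ℂ} (h₁ : IsSLF A ψ₁) (h₂ : IsSLF A ψ₂) (h : Theta p ψ₁ = Theta p ψ₂) :
    ψ₁ = ψ₂ := by
  have he : IsIdem A e := hgen.1
  have hδ : IsSLF A (ψ₁ - ψ₂) := fun x y => by simp [h₁ x y, h₂ x y]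
  have hδB : ∀ X, p * X * p = X → (ψ₁ - ψ₂) (traceLinearMap _ ℂ A X) = 0 := fun X hX => by
    simpa [Theta_apply, sub_eq_zero] using congr($h ⟨X, hX⟩)
  have hδM : ∀ X, (diagonal fun _ => e) * X = X → (ψ₁ - ψ₂) (traceLinearMap _ ℂ A X) = 0 :=
    fun X hX => hδ.comp_trace.eq_zero_of_factorsThrough hp.1.1 hδB
      (hW.factorsThrough_diagonal he hp) hX
  have hδe : ∀ x, e * x = x → (ψ₁ - ψ₂) x = 0 := fun x hx => by
    simpa using hδM (single i₀ i₀ x) (by rw [diagonal_const_mul_single, hx])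
  have hδE : ∀ i x, E i * x = x → (ψ₁ - ψ₂) x = 0 := fun i x hx =>
    hδ.eq_zero_of_factorsThrough he (fun y hy => hδe y (he.mul_corner hy))
      (hW.factorsThrough_of_isGenIdem hgen i) hx
  exact sub_eq_zero.mp (hW.linearMap_eq_zero fun i j x hx => hδE i x ((hW.1 i).mul_corner hx))

theorem exists_Theta_eq (hW : IsAUFWitness A E) (hgen : IsGenIdem A e) (i₀ : Fin n)
    (hp : IsGenIdemIn (Matrix (Fin n) (Fin n) A) (diagonal fun _ => e) p)
    {φ : subCorner (Matrix (Fin n) (Fin n) A) p p →ₗ[ℂ] ℂ}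
    (hφ : IsTraceOn p (φ ∘ₗ cornerProj hp.1.1)) : ∃ ψ : A →ₗ[ℂ] ℂ, IsSLF A ψ ∧ Theta p ψ = φ := by
  have he : IsIdem A e := hgen.1
  have hE := isIdem_diagonal (ι := Fin n) he
  obtain ⟨m, a, b, hab⟩ := hW.factorsThrough_diagonal he hp
  set Φ := traceExtend p a b (φ ∘ₗ cornerProj hp.1.1)
  have hΦ : ∀ X Y, X * diagonal (fun _ => e) = X → Y * diagonal (fun _ => e) = Y →
      Φ (X * Y) = Φ (Y * X) := fun X Y hX hY => traceExtend_mul_comm hp.1.1 hφ hab hab hX hY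
  have hΨ : IsTraceOn e (Φ ∘ₗ singleLinearMap ℂ i₀ i₀) := fun x y hx hy => by
    simp only [LinearMap.comp_apply, singleLinearMap_apply]
    rw [← single_mul_single_same x i₀ i₀ i₀ y, ← single_mul_single_same y i₀ i₀ i₀ x]
    exact hΦ _ _ (by rw [single_mul_diagonal_const, he.corner_mul hx])
      (by rw [single_mul_diagonal_const, he.corner_mul hy])
  obtain ⟨ψ, hψ, hψe⟩ :=
    hW.exists_isSLF_eq_of_isTraceOn he hΨ (hW.factorsThrough_of_isGenIdem hgen)
  refine ⟨ψ, hψ, LinearMap.ext fun X => ?_⟩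
  have hpE : p * diagonal (fun _ => e) = p := hE.corner_mul hp.1.2
  have hXp : p * X.1 * p = X.1 := X.2
  have hX : (diagonal fun _ => e) * X.1 * (diagonal fun _ => e) = X.1 :=
    subCorner_le_subCorner hE hp.1.2 hXp
  calc Theta p ψ X = Φ (single i₀ i₀ X.1.trace) := by
        rw [Theta_apply, hψe _ (mul_trace_mul_of_corner hX)]
        rfl
    _ = Φ X.1 := apply_single_trace he hΦ i₀ hX
    _ = φ X := by
        rw [traceExtend_apply_of_mem hp.1.1 hφ hab hpE hXp, LinearMap.comp_apply,
          cornerProj_apply_of_mem hp.1.1 hXp]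

end Theta

/-- Let `A` be AUF with generating idempotent `e`, let `n ≥ 1`, and let `p` be a
generating idempotent of the corner `M_n(eAe)` of `M_n(A)` at the diagonal idempotent
`E = diag(e, …, e)`.  Set `B = p M_n(eAe) p`.  Then `Θ : ψ ↦ (b ↦ Σ_k ψ(b_{kk}))` is a
well-defined ℂ-linear bijection from `SLF(A)` onto `SLF(B)`. -/
theorem stmt_15 {A : Type u} [NonUnitalRing A] [Module ℂ A] [SMulCommClass ℂ A A]
    [IsScalarTower ℂ A A] (hA : IsAUF A) (e : A) (hgen : IsGenIdem A e)
    (n : ℕ) (hn : 1 ≤ n) (p : Matrix (Fin n) (Fin n) A)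
    (hp : IsGenIdemIn (Matrix (Fin n) (Fin n) A) (Matrix.diagonal fun _ => e) p) :
    -- Θ is well defined: it sends SLFs of A to SLFs of B
    (∀ ψ : A →ₗ[ℂ] ℂ, IsSLF A ψ →
      ∀ (b c : Matrix (Fin n) (Fin n) A)
        (hb : b ∈ subCorner (Matrix (Fin n) (Fin n) A) p p)
        (hc : c ∈ subCorner (Matrix (Fin n) (Fin n) A) p p)
        (hbc : b * c ∈ subCorner (Matrix (Fin n) (Fin n) A) p p)
        (hcb : c * b ∈ subCorner (Matrix (Fin n) (Fin n) A) p p),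
        Theta p ψ ⟨b * c, hbc⟩ = Theta p ψ ⟨c * b, hcb⟩) ∧
    -- Θ is ℂ-linear
    (∀ ψ₁ ψ₂ : A →ₗ[ℂ] ℂ, Theta p (ψ₁ + ψ₂) = Theta p ψ₁ + Theta p ψ₂) ∧
    (∀ (c : ℂ) (ψ : A →ₗ[ℂ] ℂ), Theta p (c • ψ) = c • Theta p ψ) ∧
    -- Θ is injective on SLF(A)
    (∀ ψ₁ ψ₂ : A →ₗ[ℂ] ℂ, IsSLF A ψ₁ → IsSLF A ψ₂ → Theta p ψ₁ = Theta p ψ₂ → ψ₁ = ψ₂) ∧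
    -- Θ is surjective onto SLF(B)
    (∀ φ : ↥(subCorner (Matrix (Fin n) (Fin n) A) p p) →ₗ[ℂ] ℂ,
      (∀ (b c : Matrix (Fin n) (Fin n) A)
        (hb : b ∈ subCorner (Matrix (Fin n) (Fin n) A) p p)
        (hc : c ∈ subCorner (Matrix (Fin n) (Fin n) A) p p)
        (hbc : b * c ∈ subCorner (Matrix (Fin n) (Fin n) A) p p)
        (hcb : c * b ∈ subCorner (Matrix (Fin n) (Fin n) A) p p),
        φ ⟨b * c, hbc⟩ = φ ⟨c * b, hcb⟩) →
      ∃ ψ : A →ₗ[ℂ] ℂ, IsSLF A ψ ∧ Theta p ψ = φ) := by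
  obtain ⟨I, E, hW⟩ := hA
  let i₀ : Fin n := ⟨0, hn⟩
  refine ⟨fun ψ hψ b c _ _ hbc hcb => ?_, fun ψ₁ ψ₂ => ?_, fun c ψ => ?_,
    fun _ _ h₁ h₂ h => eq_of_Theta_eq hW hgen i₀ hp h₁ h₂ h,
    fun φ hφ => exists_Theta_eq hW hgen i₀ hp (isTraceOn_comp_cornerProj hp.1.1 hφ)⟩
  · rw [Theta_apply, Theta_apply]
    exact hψ.comp_trace b c
  · ext b
    simp [Theta_apply]
  · ext b
    simp [Theta_apply]
end
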